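/- arXiv:1610.08487 — 7 statements merged into one kernel-verified Lean document; each statement's English description precedes it below -/
import Mathlib

section
/- Let m and n be coprime positive integers and p a positive integer. Let x, y ∈ ℂ[[t]] be power series with ord x = m·p and ord y = n·p whose leading coefficients x₀ and y₀ satisfy y₀^m = x₀^n. Then there exists a unique pair (v, w) of power series in ℂ[[t]] with zero constant term such that v^m = x and v^n·(1 + w) = y. -/
/-!
Write `x = t ^ (m * p) * u` and `y = t ^ (n * p) * u'` with `u(0) = x₀ ≠ 0` and
`u'(0) = y₀ ≠ 0`. A solution has `v = t ^ p * s` with `s ^ m = u` and `1 + w = u' / s ^ n`,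
and `w(0) = 0` forces `s(0) ^ n = y₀` besides `s(0) ^ m = x₀`. Since `m` and `n` are coprime
there is exactly one such constant `c`, and Hensel's lemma for `T ^ m - u` over the complete
local ring `ℂ[[t]]` gives exactly one `s` with `s(0) = c` and `s ^ m = u`.
-/

open PowerSeries

theorem eq_of_pow_eq_pow_of_coprime {G₀ : Type*} [CommGroupWithZero G₀] {m n : ℕ}
    (hmn : m.Coprime n) {a b : G₀} (hb : b ≠ 0) (hm : a ^ m = b ^ m) (hn : a ^ n = b ^ n) :
    a = b := by
  rw [← div_eq_one_iff_eq hb, ← pow_eq_one_iff_of_coprime hmn, div_pow, div_pow, hm, hn,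
    div_self (pow_ne_zero _ hb), div_self (pow_ne_zero _ hb)]
  exact ⟨rfl, rfl⟩

namespace PowerSeries

variable {R : Type*} [CommRing R]

theorem smodEq_span_X_pow_iff {n : ℕ} {a b : R⟦X⟧} :
    a ≡ b [SMOD (Ideal.span {(X : R⟦X⟧)} ^ n • ⊤ : Ideal R⟦X⟧)] ↔
      ∀ i < n, coeff i a = coeff i b := by
  simp only [smul_eq_mul, Ideal.mul_top, SModEq.sub_mem, Ideal.span_singleton_pow,
    Ideal.mem_span_singleton, X_pow_dvd_iff, map_sub, sub_eq_zero]

instance : IsAdicComplete (Ideal.span {(X : R⟦X⟧)}) R⟦X⟧ where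
  haus' f hf := by
    ext i
    simpa using smodEq_span_X_pow_iff.1 (hf (i + 1)) i i.lt_succ_self
  prec' f hf := by
    refine ⟨mk fun i ↦ coeff i (f (i + 1)), fun n ↦ smodEq_span_X_pow_iff.2 fun i hi ↦ ?_⟩
    rw [coeff_mk]
    rcases le_total n (i + 1) with h | h
    · exact smodEq_span_X_pow_iff.1 (hf h) i hi
    · exact (smodEq_span_X_pow_iff.1 (hf h) i i.lt_succ_self).symm

theorem existsUnique_pow_eq_of_constantCoeff [IsLocalRing R] {m : ℕ} (hm : IsUnit (m : R))
    {u : R⟦X⟧} {c : R} (hc : IsUnit c) (h : c ^ m = constantCoeff u) :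
    ∃! s : R⟦X⟧, constantCoeff s = c ∧ s ^ m = u := by
  have hm₀ : m ≠ 0 := by rintro rfl; simp at hm
  set f : Polynomial R⟦X⟧ := .X ^ m - .C u
  have hf_root {s : R⟦X⟧} : f.IsRoot s ↔ s ^ m = u := by simp [f, sub_eq_zero]
  have hf_deriv {s : R⟦X⟧} (hs : constantCoeff s = c) : IsUnit (f.derivative.eval s) := by
    rw [isUnit_iff_constantCoeff]
    simpa [f, hs, Polynomial.derivative_X_pow] using hm.mul (hc.pow _)
  have hmem {s : R⟦X⟧} : s - C c ∈ Ideal.span {X} ↔ constantCoeff s = c := by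
    rw [Ideal.mem_span_singleton, X_dvd_iff, map_sub, constantCoeff_C, sub_eq_zero]
  obtain ⟨s, hs, hsc⟩ := HenselianRing.is_henselian (I := Ideal.span {X}) f
    (Polynomial.monic_X_pow_sub_C u hm₀) (C c)
    (by simp [f, ← h, Ideal.mem_span_singleton, X_dvd_iff])
    ((hf_deriv (constantCoeff_C c)).map _)
  refine ⟨s, ⟨hmem.1 hsc, hf_root.1 hs⟩, fun t ⟨htc, ht⟩ ↦ ?_⟩
  refine IsLocalRing.eq_of_eval_eq_zero_of_not_isUnit_sub (hf_root.2 ht) hs ?_ (hf_deriv htc)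
  simp [isUnit_iff_constantCoeff, htc, hmem.1 hsc]

theorem exists_eq_X_pow_mul_of_order_eq {S : Type*} [Semiring S] {f : S⟦X⟧} {k : ℕ}
    (h : f.order = k) : ∃ g : S⟦X⟧, constantCoeff g ≠ 0 ∧ f = X ^ k * g := by
  refine ⟨f.divXPowOrder, ?_, ?_⟩
  · rw [constantCoeff_divXPowOrder, h, ENat.toNat_natCast]
    exact (order_eq_nat.1 h).1
  · simpa [h] using (X_pow_order_mul_divXPowOrder (f := f)).symm

theorem exists_eq_X_pow_mul_of_pow_eq [IsDomain R] {m p : ℕ} (hm : m ≠ 0) {v u : R⟦X⟧}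
    (hu : constantCoeff u ≠ 0) (h : v ^ m = X ^ (m * p) * u) :
    ∃ s : R⟦X⟧, v = X ^ p * s ∧ s ^ m = u := by
  have hv : v.order = p := by
    have hu₀ : u.order = 0 := order_eq_nat.2 ⟨by simpa using hu, by simp⟩
    have hv₀ : v ≠ 0 := by
      rintro rfl
      simp [hm, X_ne_zero, eq_comm (a := (0 : R⟦X⟧))] at h
      simp [h] at hu
    obtain ⟨d, hd⟩ := ENat.ne_top_iff_exists.1 (order_finite_iff_ne_zero.2 hv₀).ne
    have := congrArg order h
    rw [order_pow, order_mul, order_X_pow, hu₀, ← hd, add_zero, nsmul_eq_mul] at this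
    rw [← hd, Nat.eq_of_mul_eq_mul_left (Nat.pos_of_ne_zero hm) (m := d) (by exact_mod_cast this)]
  obtain ⟨s, -, rfl⟩ := exists_eq_X_pow_mul_of_order_eq hv
  refine ⟨s, rfl, mul_left_cancel₀ (pow_ne_zero (m * p) X_ne_zero) ?_⟩
  rw [← h, mul_pow, ← pow_mul, mul_comm p]

end PowerSeries

theorem stmt2_general (m n p : ℕ) (hm : 0 < m) (hmn : Nat.Coprime m n) (hp : 0 < p)
    (x y : PowerSeries ℂ)
    (hxord : x.order = (m * p : ℕ)) (hyord : y.order = (n * p : ℕ))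
    (hlead : (PowerSeries.coeff (R := ℂ) (n * p) y) ^ m = (PowerSeries.coeff (R := ℂ) (m * p) x) ^ n) :
    ∃! vw : PowerSeries ℂ × PowerSeries ℂ,
      PowerSeries.constantCoeff (R := ℂ) vw.1 = 0 ∧ PowerSeries.constantCoeff (R := ℂ) vw.2 = 0 ∧
      vw.1 ^ m = x ∧ vw.1 ^ n * (1 + vw.2) = y := by
  obtain ⟨u, hu, rfl⟩ := exists_eq_X_pow_mul_of_order_eq hxord
  obtain ⟨u', hu', rfl⟩ := exists_eq_X_pow_mul_of_order_eq hyord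
  simp only [coeff_X_pow_mul', le_refl, if_true, Nat.sub_self,
    coeff_zero_eq_constantCoeff_apply] at hlead
  obtain ⟨c, hcn, hcm⟩ := (pow_eq_pow_iff_of_coprime hmn).1 hlead
  have hc : c ≠ 0 := by rintro rfl; exact hu (by simpa [hm.ne'] using hcm)
  obtain ⟨s, ⟨hsc, hsm⟩, hs_unique⟩ := existsUnique_pow_eq_of_constantCoeff
    (Nat.cast_ne_zero.2 hm.ne').isUnit hc.isUnit hcm.symm
  have hsn : constantCoeff (s ^ n) ≠ 0 := by rw [map_pow, hsc]; exact pow_ne_zero n hc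
  refine ⟨(X ^ p * s, u' * (s ^ n)⁻¹ - 1),
    ⟨by simp [hp.ne'], by simp [hsc, hcn, hc], ?_, ?_⟩, ?_⟩
  · rw [mul_pow, ← pow_mul, hsm, mul_comm p]
  · rw [add_sub_cancel, mul_pow, ← pow_mul, mul_comm p, mul_assoc, mul_left_comm (s ^ n),
      PowerSeries.mul_inv_cancel _ hsn, mul_one]
  rintro ⟨v, w⟩ ⟨-, hw, hvm, hvn⟩
  obtain ⟨t, rfl, htm⟩ := exists_eq_X_pow_mul_of_pow_eq hm.ne' hu hvm
  have htn : t ^ n * (1 + w) = u' := by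
    refine mul_left_cancel₀ (pow_ne_zero (n * p) X_ne_zero) ?_
    rw [← hvn, mul_pow, ← pow_mul, mul_comm p, mul_assoc]
  obtain rfl : t = s := hs_unique t ⟨eq_of_pow_eq_pow_of_coprime hmn hc
    (by simpa [← hcm] using congrArg constantCoeff htm)
    (by simpa [hw, ← hcn] using congrArg constantCoeff htn), htm⟩
  rw [Prod.mk.injEq, eq_sub_iff_add_eq', PowerSeries.eq_mul_inv_iff_mul_eq hsn, mul_comm (1 + w),
    htn]
  exact ⟨rfl, rfl⟩

/-- Let `m` and `n` be coprime positive integers and `p` a positive integer.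
Let `x, y ∈ ℂ[[t]]` be power series with `ord x = m·p` and `ord y = n·p` whose leading
coefficients `x₀` and `y₀` satisfy `y₀ ^ m = x₀ ^ n`. Then there exists a unique pair
`(v, w)` of power series in `ℂ[[t]]` with zero constant term such that `v ^ m = x` and
`v ^ n * (1 + w) = y`. -/
theorem stmt2 (m n p : ℕ) (hm : 0 < m) (hn : 0 < n) (hmn : Nat.Coprime m n) (hp : 0 < p)
    (x y : PowerSeries ℂ)
    (hxord : x.order = (m * p : ℕ)) (hyord : y.order = (n * p : ℕ))
    (hlead : (PowerSeries.coeff (R := ℂ) (n * p) y) ^ m = (PowerSeries.coeff (R := ℂ) (m * p) x) ^ n) :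
    ∃! vw : PowerSeries ℂ × PowerSeries ℂ,
      PowerSeries.constantCoeff (R := ℂ) vw.1 = 0 ∧ PowerSeries.constantCoeff (R := ℂ) vw.2 = 0 ∧
      vw.1 ^ m = x ∧ vw.1 ^ n * (1 + vw.2) = y :=
  stmt2_general m n p hm hmn hp x y hxord hyord hlead
end

section
/- Let m and n be coprime positive integers and let x, y ∈ ℂ[[t]] be power series with zero constant term, not both zero. Then there exist power series v, w ∈ ℂ[[t]] with zero constant term satisfying x = v^m and y = v^n·(1 + w) if and only if there exists a positive integer p such that ord x = m·p, ord y = n·p, and the leading coefficients x₀ of x and y₀ of y satisfy y₀^m = x₀^n. -/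
/-!
If `v = t^p u` with `u(0) ≠ 0`, then `x = t^(mp) u^m` and `y = t^(np) u^n (1 + w)`, so both
leading coefficients are powers of `u(0)` and `y₀^m = u(0)^(mn) = x₀^n`. Conversely, write
`x = t^(mp) a` and `y = t^(np) b` with `a(0), b(0) ≠ 0`. Because `m` and `n` are coprime, the
relation `b(0)^m = a(0)^n` yields `c` with `c^m = a(0)` and `c^n = b(0)`, and Hensel's lemma lifts
`c` to an `m`-th root `r` of `a`; then `v = t^p r` and `1 + w = b / r^n`.
-/

open PowerSeries

theorem exists_pow_eq_and_pow_eq_of_coprime {G : Type*} [CommGroup G] {m n : ℕ}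
    (hmn : m.Coprime n) {a b : G} (h : b ^ m = a ^ n) : ∃ c : G, c ^ m = a ∧ c ^ n = b := by
  have hab : m * Nat.gcdA m n + n * Nat.gcdB m n = 1 := by
    have := Nat.gcd_eq_gcd_ab m n
    rw [hmn] at this
    exact_mod_cast this.symm
  have hbm : ∀ k : ℤ, b ^ (m * k) = a ^ (n * k) := fun k => by
    rw [zpow_mul, zpow_mul, zpow_natCast, zpow_natCast, h]
  refine ⟨a ^ Nat.gcdA m n * b ^ Nat.gcdB m n, ?_, ?_⟩
  · rw [← zpow_natCast, mul_zpow, ← zpow_mul, ← zpow_mul, mul_comm _ (m : ℤ),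
      mul_comm _ (m : ℤ), hbm, ← zpow_add, hab, zpow_one]
  · rw [← zpow_natCast, mul_zpow, ← zpow_mul, ← zpow_mul, mul_comm _ (n : ℤ),
      mul_comm _ (n : ℤ), ← hbm, ← zpow_add, hab, zpow_one]

theorem exists_pow_eq_and_pow_eq_of_coprime₀ {G₀ : Type*} [CommGroupWithZero G₀] {m n : ℕ}
    (hm : m ≠ 0) (hmn : m.Coprime n) {a b : G₀} (ha : a ≠ 0) (h : b ^ m = a ^ n) :
    ∃ c : G₀, c ^ m = a ∧ c ^ n = b := by
  have hb : b ≠ 0 := by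
    rintro rfl
    exact pow_ne_zero n ha (by rw [← h, zero_pow hm])
  obtain ⟨c, hca, hcb⟩ := exists_pow_eq_and_pow_eq_of_coprime (a := Units.mk0 a ha)
    (b := Units.mk0 b hb) hmn (Units.ext (by simpa using h))
  exact ⟨c, by simpa using congrArg Units.val hca, by simpa using congrArg Units.val hcb⟩

namespace PowerSeries

section Semiring

variable {R : Type*} [Semiring R]

theorem coeff_X_pow_mul_self (u : R⟦X⟧) (d : ℕ) : coeff d (X ^ d * u) = constantCoeff u := by
  simpa using coeff_X_pow_mul u d 0

theorem order_X_pow_mul_of_constantCoeff_ne_zero {u : R⟦X⟧} (hu : constantCoeff u ≠ 0)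
    (d : ℕ) : (X ^ d * u).order = (d : ℕ∞) :=
  order_eq_nat.mpr ⟨by rwa [coeff_X_pow_mul_self], fun i hi => by
    simp [coeff_X_pow_mul', hi.not_ge]⟩

theorem order_eq_nat_iff_exists_X_pow_mul {f : R⟦X⟧} {d : ℕ} :
    f.order = d ↔ ∃ u : R⟦X⟧, constantCoeff u ≠ 0 ∧ f = X ^ d * u := by
  refine ⟨fun hd => ⟨divXPowOrder f, ?_, ?_⟩, ?_⟩
  · rw [Ne, constantCoeff_divXPowOrder_eq_zero_iff, ← order_eq_top, hd]
    exact ENat.natCast_ne_top d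
  · rw [← ENat.toNat_natCast d, ← hd, X_pow_order_mul_divXPowOrder]
  · rintro ⟨u, hu, rfl⟩
    exact order_X_pow_mul_of_constantCoeff_ne_zero hu d

end Semiring

theorem exists_pow_eq_of_constantCoeff_eq_pow {R : Type*} [CommRing R] {m : ℕ} (hm : m ≠ 0)
    (hmR : IsUnit (m : R)) {u : R⟦X⟧} {c : R} (hc : IsUnit c) (hcu : c ^ m = constantCoeff u) :
    ∃ r : R⟦X⟧, r ^ m = u ∧ constantCoeff r = c := by
  let f : Polynomial R⟦X⟧ := Polynomial.X ^ m - Polynomial.C u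
  have hfc : f.eval (C c) ∈ Ideal.span {X} := by
    simp [f, Ideal.mem_span_singleton, X_dvd_iff, hcu]
  have hf'c : IsUnit (Ideal.Quotient.mk (Ideal.span {X}) (f.derivative.eval (C c))) := by
    refine IsUnit.map _ (isUnit_iff_constantCoeff.mpr ?_)
    simpa [f, Polynomial.derivative_X_pow] using hmR.mul (hc.pow (m - 1))
  obtain ⟨r, hr, hrc⟩ :=
    HenselianRing.is_henselian f (Polynomial.monic_X_pow_sub_C u hm) (C c) hfc hf'c
  refine ⟨r, by simpa [f, sub_eq_zero] using hr, ?_⟩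
  rwa [Ideal.mem_span_singleton, X_dvd_iff, map_sub, constantCoeff_C, sub_eq_zero] at hrc

theorem exists_order_eq_of_eq_pow_and_eq_pow_mul_one_add {R : Type*} [CommSemiring R]
    [NoZeroDivisors R] {m n : ℕ} {v w x y : R⟦X⟧} (hv : v ≠ 0) (hv0 : constantCoeff v = 0)
    (hw0 : constantCoeff w = 0) (hx : x = v ^ m) (hy : y = v ^ n * (1 + w)) :
    ∃ p : ℕ, 0 < p ∧ x.order = (m * p : ℕ) ∧ y.order = (n * p : ℕ) ∧
      coeff (n * p) y ^ m = coeff (m * p) x ^ n := by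
  obtain ⟨p, hp⟩ := ENat.ne_top_iff_exists.mp (order_eq_top.not.mpr hv)
  obtain ⟨u, hu, rfl⟩ := order_eq_nat_iff_exists_X_pow_mul.mp hp.symm
  have hp0 : 0 < p := Nat.pos_of_ne_zero <| by
    rintro rfl
    exact hu (by simpa using hv0)
  have hxu : x = X ^ (m * p) * u ^ m := by rw [hx, mul_pow, ← pow_mul, mul_comm p m]
  have hyu : y = X ^ (n * p) * (u ^ n * (1 + w)) := by
    rw [hy, mul_pow, ← pow_mul, mul_comm p n, mul_assoc]
  have hum : constantCoeff (u ^ m) = constantCoeff u ^ m := map_pow _ _ _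
  have hun : constantCoeff (u ^ n * (1 + w)) = constantCoeff u ^ n := by simp [hw0]
  refine ⟨p, hp0, ?_, ?_, ?_⟩
  · rw [hxu, order_X_pow_mul_of_constantCoeff_ne_zero (hum ▸ pow_ne_zero m hu)]
  · rw [hyu, order_X_pow_mul_of_constantCoeff_ne_zero (hun ▸ pow_ne_zero n hu)]
  · rw [hxu, hyu, coeff_X_pow_mul_self, coeff_X_pow_mul_self, hum, hun, ← pow_mul, ← pow_mul,
      mul_comm]

theorem exists_eq_pow_and_eq_pow_mul_one_add_of_order_eq {k : Type*} [Field k] {m n p : ℕ}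
    (hm : (m : k) ≠ 0) (hmn : m.Coprime n) (hp : 0 < p) {x y : k⟦X⟧}
    (hx : x.order = (m * p : ℕ)) (hy : y.order = (n * p : ℕ))
    (hxy : coeff (n * p) y ^ m = coeff (m * p) x ^ n) :
    ∃ v w : k⟦X⟧, constantCoeff v = 0 ∧ constantCoeff w = 0 ∧
      x = v ^ m ∧ y = v ^ n * (1 + w) := by
  obtain ⟨u, hu, rfl⟩ := order_eq_nat_iff_exists_X_pow_mul.mp hx
  obtain ⟨s, hs, rfl⟩ := order_eq_nat_iff_exists_X_pow_mul.mp hy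
  rw [coeff_X_pow_mul_self, coeff_X_pow_mul_self] at hxy
  have hm0 : m ≠ 0 := by rintro rfl; exact hm Nat.cast_zero
  obtain ⟨c, hcm, hcn⟩ := exists_pow_eq_and_pow_eq_of_coprime₀ hm0 hmn hu hxy
  have hc : c ≠ 0 := by rintro rfl; exact hu (by rw [← hcm, zero_pow hm0])
  obtain ⟨r, hrm, hrc⟩ :=
    exists_pow_eq_of_constantCoeff_eq_pow hm0 hm.isUnit hc.isUnit hcm
  have hrn : constantCoeff (r ^ n) = constantCoeff s := by rw [map_pow, hrc, hcn]
  refine ⟨X ^ p * r, s * (r ^ n)⁻¹ - 1, by simp [hp.ne'], ?_, ?_, ?_⟩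
  · simp [constantCoeff_inv, hrn, hs]
  · rw [mul_pow, ← pow_mul, mul_comm p m, hrm]
  · rw [add_sub_cancel, mul_pow, ← pow_mul, mul_comm p n, mul_assoc, mul_left_comm (r ^ n) s,
      PowerSeries.mul_inv_cancel _ (hrn ▸ hs), mul_one]

end PowerSeries

theorem stmt3_general (m n : ℕ) (hm : 0 < m) (hn : 0 < n) (hmn : Nat.Coprime m n)
    (x y : PowerSeries ℂ)
    (hxy : ¬(x = 0 ∧ y = 0)) :
    (∃ v w : PowerSeries ℂ,
        PowerSeries.constantCoeff v = 0 ∧ PowerSeries.constantCoeff w = 0 ∧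
        x = v ^ m ∧ y = v ^ n * (1 + w)) ↔
    (∃ p : ℕ, 0 < p ∧ x.order = (m * p : ℕ) ∧ y.order = (n * p : ℕ) ∧
        (PowerSeries.coeff (n * p) y) ^ m = (PowerSeries.coeff (m * p) x) ^ n) := by
  constructor
  · rintro ⟨v, w, hv0, hw0, hx, hy⟩
    have hv : v ≠ 0 := by
      rintro rfl
      exact hxy ⟨by simp [hx, hm.ne'], by simp [hy, hn.ne']⟩
    exact exists_order_eq_of_eq_pow_and_eq_pow_mul_one_add hv hv0 hw0 hx hy
  · rintro ⟨p, hp, hx, hy, hlead⟩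
    exact exists_eq_pow_and_eq_pow_mul_one_add_of_order_eq (Nat.cast_ne_zero.mpr hm.ne') hmn hp
      hx hy hlead

/-- Let `m` and `n` be coprime positive integers and let `x, y ∈ ℂ[[t]]` be power series
with zero constant term, not both zero. Then there exist power series `v, w ∈ ℂ[[t]]` with
zero constant term satisfying `x = v ^ m` and `y = v ^ n * (1 + w)` if and only if there
exists a positive integer `p` such that `ord x = m·p`, `ord y = n·p`, and the leading
coefficients `x₀` of `x` and `y₀` of `y` satisfy `y₀ ^ m = x₀ ^ n`. -/
theorem stmt3 (m n : ℕ) (hm : 0 < m) (hn : 0 < n) (hmn : Nat.Coprime m n)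
    (x y : PowerSeries ℂ)
    (hx0 : PowerSeries.constantCoeff x = 0) (hy0 : PowerSeries.constantCoeff y = 0)
    (hxy : ¬(x = 0 ∧ y = 0)) :
    (∃ v w : PowerSeries ℂ,
        PowerSeries.constantCoeff v = 0 ∧ PowerSeries.constantCoeff w = 0 ∧
        x = v ^ m ∧ y = v ^ n * (1 + w)) ↔
    (∃ p : ℕ, 0 < p ∧ x.order = (m * p : ℕ) ∧ y.order = (n * p : ℕ) ∧
        (PowerSeries.coeff (n * p) y) ^ m = (PowerSeries.coeff (m * p) x) ^ n) :=
  stmt3_general m n hm hn hmn x y hxy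
end

section
/- Let m and n be coprime positive integers, let d′ be a positive integer, and let g ∈ ℂ[[X,Y]] be a formal power series in two variables such that every monomial X^a·Y^b occurring in g with nonzero coefficient satisfies m·a + n·b > m·n·d′. Set f = (Y^m − X^n)^{d′} + g. Let x, y ∈ ℂ[[t]] be power series with zero constant term, not both zero, and assume there is no positive integer p such that ord x = m·p, ord y = n·p, and the leading coefficients x₀ of x and y₀ of y satisfy y₀^m = x₀^n. Then ord( f(x,y) − (y^m − x^n)^{d′} ) > ord( (y^m − x^n)^{d′} ); in particular f(x,y) and (y^m − x^n)^{d′} have the same order and the same leading coefficient. -/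
open PowerSeries

/-- Evaluation `F(x,y)` of a two-variable formal power series `F ∈ ℂ[[X,Y]]` at a pair of
one-variable power series `x, y ∈ ℂ[[t]]`.  (The formula below computes the correct
substitution whenever `x` and `y` have zero constant term: the coefficient of `t^k` in
`F(x,y)` only receives contributions from monomials `X^a·Y^b` with `a + b ≤ k`, and in
particular with `a ≤ k` and `b ≤ k`.) -/
noncomputable def mvEval (F : MvPowerSeries (Fin 2) ℂ) (x y : PowerSeries ℂ) :
    PowerSeries ℂ :=
  PowerSeries.mk fun k =>
    ∑ ab ∈ Finset.range (k + 1) ×ˢ Finset.range (k + 1),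
      MvPowerSeries.coeff (Finsupp.single 0 ab.1 + Finsupp.single 1 ab.2) F *
        PowerSeries.coeff k (x ^ ab.1 * y ^ ab.2)

/-!
Write `μ = ord (y^m - x^n)`. The leading terms of `y^m` and `x^n` have orders `m·ord y` and
`n·ord x`; they can only cancel if these orders agree, which by coprimality means
`ord x = m p`, `ord y = n p`, and if moreover `y₀^m = x₀^n`. This is excluded, so
`μ = min (m·ord y) (n·ord x)`, a positive integer. Hence a monomial `X^a Y^b` evaluates to a
series of order at least `(m a + n b) μ / (m n)`, which for the monomials of `g` exceeds
`d' μ = ord ((y^m - x^n)^{d'})`.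
-/
theorem Nat.Coprime.exists_eq_mul_of_mul_eq {m n a b : ℕ} (hmn : Nat.Coprime m n)
    (hn : 0 < n) (h : m * b = n * a) : ∃ p, a = m * p ∧ b = n * p := by
  obtain ⟨p, rfl⟩ : n ∣ b := hmn.symm.dvd_of_dvd_mul_left ⟨a, h⟩
  refine ⟨p, Nat.eq_of_mul_eq_mul_left hn ?_, rfl⟩
  rw [← h]; ring

theorem Finsupp.single_zero_add_single_one_eq_iff {s : Fin 2 →₀ ℕ} {a b : ℕ} :
    Finsupp.single 0 a + Finsupp.single 1 b = s ↔ (a, b) = (s 0, s 1) := by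
  constructor
  · rintro rfl; simp
  · intro h
    obtain ⟨rfl, rfl⟩ := Prod.ext_iff.mp h
    ext i; fin_cases i <;> simp


namespace PowerSeries

variable {R : Type*}

theorem coeff_pow_of_order_eq [CommSemiring R] [NoZeroDivisors R] [Nontrivial R]
    {φ : R⟦X⟧} {k : ℕ} (hφ : φ.order = k) (n : ℕ) :
    coeff (n * k) (φ ^ n) = coeff k φ ^ n := by
  have h := congrArg constantCoeff (divXPowOrder_pow φ n)
  rw [map_pow, ← coeff_zero_eq_constantCoeff_apply, ← coeff_zero_eq_constantCoeff_apply,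
    coeff_divXPowOrder, coeff_divXPowOrder, zero_add, zero_add, order_pow, hφ] at h
  simpa [nsmul_eq_mul] using h

theorem order_sub_of_coeff_ne [Ring R] {φ ψ : R⟦X⟧} {k : ℕ} (hφ : φ.order = k)
    (hψ : ψ.order = k) (hne : coeff k φ ≠ coeff k ψ) : (φ - ψ).order = k := by
  refine order_eq_nat.mpr ⟨by rwa [map_sub, sub_ne_zero], fun i hi => ?_⟩
  rw [map_sub, coeff_of_lt_order i (by rw [hφ]; exact_mod_cast hi),
    coeff_of_lt_order i (by rw [hψ]; exact_mod_cast hi), sub_zero]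

theorem coeff_pow_mul_pow_of_lt [CommSemiring R] {x y : R⟦X⟧} (hx : constantCoeff x = 0)
    (hy : constantCoeff y = 0) {a b k : ℕ} (hk : k < a + b) :
    coeff k (x ^ a * y ^ b) = 0 := by
  refine coeff_of_lt_order k (lt_of_lt_of_le (Nat.cast_lt.mpr hk) ?_)
  calc ((a + b : ℕ) : ℕ∞) = a + b := by push_cast; rfl
    _ ≤ (x ^ a).order + (y ^ b).order :=
      add_le_add (le_order_pow_of_constantCoeff_eq_zero a hx)
        (le_order_pow_of_constantCoeff_eq_zero b hy)
    _ ≤ (x ^ a * y ^ b).order := le_order_mul _ _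

theorem lt_order_pow_mul_pow [CommSemiring R] {x y : R⟦X⟧} {m n a b μ N : ℕ}
    (hx : (μ : ℕ∞) ≤ n • x.order) (hy : (μ : ℕ∞) ≤ m • y.order)
    (h : m * n * N < (m * a + n * b) * μ) : (N : ℕ∞) < (x ^ a * y ^ b).order := by
  refine lt_of_mul_lt_mul_left' (a := ((m * n : ℕ) : ℕ∞)) ?_
  calc ((m * n : ℕ) : ℕ∞) * N < ((m * a + n * b) * μ : ℕ) := by exact_mod_cast h
    _ = m * a * μ + n * b * μ := by push_cast; ring
    _ ≤ m * a * (n • x.order) + n * b * (m • y.order) := by gcongr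
    _ = (m * n : ℕ) * (a • x.order + b • y.order) := by
      simp only [nsmul_eq_mul]; push_cast; ring
    _ ≤ (m * n : ℕ) * ((x ^ a).order + (y ^ b).order) := by
      gcongr <;> exact le_order_pow _ _
    _ ≤ (m * n : ℕ) * (x ^ a * y ^ b).order := by gcongr; exact le_order_mul _ _

theorem order_pow_sub_pow [CommRing R] [IsDomain R] {m n : ℕ} (hm : 0 < m)
    (hn : 0 < n) (hmn : Nat.Coprime m n) {x y : R⟦X⟧} (hx0 : constantCoeff x = 0)
    (hnoC : ¬ ∃ p : ℕ, 0 < p ∧ x.order = (m * p : ℕ) ∧ y.order = (n * p : ℕ) ∧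
        coeff (n * p) y ^ m = coeff (m * p) x ^ n) :
    (y ^ m - x ^ n).order = min (m • y.order) (n • x.order) := by
  have hle : min (m • y.order) (n • x.order) ≤ (y ^ m - x ^ n).order := by
    simpa only [sub_eq_add_neg, order_neg, order_pow] using
      min_order_le_order_add (y ^ m) (-x ^ n)
  rcases ne_or_eq (m • y.order) (n • x.order) with hne | heq
  · rw [sub_eq_add_neg, order_add_of_order_ne _ _ (by rwa [order_neg, order_pow, order_pow]),
      order_neg, order_pow, order_pow]
  rw [← heq, min_self] at hle ⊢
  refine le_antisymm ?_ hle
  have hcast (a b : ℕ) : a • (b : ℕ∞) = (a * b : ℕ) := by rw [nsmul_eq_mul, Nat.cast_mul]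
  rcases eq_or_ne y.order ⊤ with hy | hy
  · simp [hy, hm.ne']
  obtain ⟨oy, hoy⟩ := ENat.ne_top_iff_exists.mp hy
  have hx : x.order ≠ ⊤ := by
    intro hx
    rw [hx, ← hoy, hcast, nsmul_eq_mul, ENat.mul_top (by exact_mod_cast hn.ne')] at heq
    exact ENat.natCast_ne_top _ heq
  obtain ⟨ox, hox⟩ := ENat.ne_top_iff_exists.mp hx
  have hmul : m * oy = n * ox := by
    rw [← hoy, ← hox, hcast, hcast] at heq
    exact_mod_cast heq
  obtain ⟨p, rfl, rfl⟩ := hmn.exists_eq_mul_of_mul_eq hn hmul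
  have hp : 0 < p := by
    have : 1 ≤ m * p := by
      exact_mod_cast (one_le_order_iff_constCoeff_eq_zero.mpr hx0).trans_eq hox.symm
    exact Nat.pos_of_ne_zero (by rintro rfl; simp at this)
  have hlead : coeff (m * (n * p)) (y ^ m) ≠ coeff (m * (n * p)) (x ^ n) := by
    rw [coeff_pow_of_order_eq hoy.symm, hmul, coeff_pow_of_order_eq hox.symm]
    exact fun h => hnoC ⟨p, hp, hox.symm, hoy.symm, h⟩
  rw [order_sub_of_coeff_ne (by rw [order_pow, ← hoy, hcast])
    (by rw [order_pow, ← hox, hcast, hmul]) hlead, ← hoy, hcast]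

theorem exists_order_pow_sub_pow_eq [CommRing R] [IsDomain R] {m n : ℕ} (hm : 0 < m)
    (hn : 0 < n) (hmn : Nat.Coprime m n) {x y : R⟦X⟧} (hx0 : constantCoeff x = 0)
    (hy0 : constantCoeff y = 0) (hxy : ¬(x = 0 ∧ y = 0))
    (hnoC : ¬ ∃ p : ℕ, 0 < p ∧ x.order = (m * p : ℕ) ∧ y.order = (n * p : ℕ) ∧
        coeff (n * p) y ^ m = coeff (m * p) x ^ n) :
    ∃ μ : ℕ, 0 < μ ∧ (μ : ℕ∞) ≤ n • x.order ∧ (μ : ℕ∞) ≤ m • y.order ∧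
      (y ^ m - x ^ n).order = μ := by
  have hw := order_pow_sub_pow hm hn hmn hx0 hnoC
  have hw_ne_top : (y ^ m - x ^ n).order ≠ ⊤ := by
    rw [hw, ← order_pow, ← order_pow, ne_eq, min_eq_top, order_eq_top, order_eq_top,
      pow_eq_zero_iff hm.ne', pow_eq_zero_iff hn.ne']
    exact fun ⟨hy, hx⟩ => hxy ⟨hx, hy⟩
  obtain ⟨μ, hμ⟩ := ENat.ne_top_iff_exists.mp hw_ne_top
  have hμpos : (1 : ℕ∞) ≤ μ := hμ ▸
    one_le_order_iff_constCoeff_eq_zero.mpr (by simp [hx0, hy0, hm.ne', hn.ne'])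
  exact ⟨μ, by exact_mod_cast hμpos, (hμ.trans hw).le.trans (min_le_right _ _),
    (hμ.trans hw).le.trans (min_le_left _ _), hμ.symm⟩

end PowerSeries

section mvEval

variable {x y : ℂ⟦X⟧}

theorem mvEval_add (F G : MvPowerSeries (Fin 2) ℂ) :
    mvEval (F + G) x y = mvEval F x y + mvEval G x y := by
  ext k
  simp [mvEval, add_mul, Finset.sum_add_distrib]

theorem mvEval_monomial (hx : constantCoeff x = 0) (hy : constantCoeff y = 0)
    (s : Fin 2 →₀ ℕ) (c : ℂ) :
    mvEval (MvPowerSeries.monomial s c) x y = C c * (x ^ s 0 * y ^ s 1) := by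
  ext k
  simp only [mvEval, coeff_mk, coeff_C_mul, MvPowerSeries.coeff_monomial, ite_mul, zero_mul,
    Finsupp.single_zero_add_single_one_eq_iff, Finset.sum_ite_eq']
  split_ifs with hs
  · rfl
  · simp only [Finset.mem_product, Finset.mem_range, not_and_or, not_lt] at hs
    rw [coeff_pow_mul_pow_of_lt hx hy (by omega), mul_zero]

theorem mvEval_coe (hx : constantCoeff x = 0) (hy : constantCoeff y = 0)
    (P : MvPolynomial (Fin 2) ℂ) : mvEval P x y = MvPolynomial.aeval ![x, y] P := by
  induction P using MvPolynomial.induction_on' with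
  | monomial s c =>
    rw [MvPolynomial.coe_monomial, mvEval_monomial hx hy, MvPolynomial.aeval_monomial,
      Finsupp.prod_fintype _ _ (by simp), Fin.prod_univ_two]
    rfl
  | add P Q hP hQ => rw [MvPolynomial.coe_add, mvEval_add, hP, hQ, map_add]

theorem lt_order_mvEval {g : MvPowerSeries (Fin 2) ℂ} {N : ℕ}
    (hg : ∀ d, MvPowerSeries.coeff d g ≠ 0 → (N : ℕ∞) < (x ^ d 0 * y ^ d 1).order) :
    (N : ℕ∞) < (mvEval g x y).order := by
  refine lt_of_lt_of_le (by exact_mod_cast N.lt_succ_self) (nat_le_order _ _ fun k hk => ?_)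
  rw [mvEval, coeff_mk]
  refine Finset.sum_eq_zero fun ab _ => ?_
  obtain ⟨a, b⟩ := ab
  by_cases hc : MvPowerSeries.coeff (Finsupp.single 0 a + Finsupp.single 1 b) g = 0
  · rw [hc, zero_mul]
  · have hab : (N : ℕ∞) < (x ^ a * y ^ b).order := by simpa using hg _ hc
    have hkN : (k : ℕ∞) ≤ N := by exact_mod_cast Nat.lt_succ_iff.mp hk
    exact mul_eq_zero_of_right _ (coeff_of_lt_order k (hkN.trans_lt hab))

theorem mvEval_pow_sub_pow (hx : constantCoeff x = 0) (hy : constantCoeff y = 0)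
    (m n d : ℕ) :
    mvEval ((MvPowerSeries.X 1 ^ m - MvPowerSeries.X 0 ^ n) ^ d) x y = (y ^ m - x ^ n) ^ d := by
  have hpoly : (MvPowerSeries.X 1 ^ m - MvPowerSeries.X 0 ^ n : MvPowerSeries (Fin 2) ℂ) ^ d =
      MvPolynomial.coeToMvPowerSeries.ringHom
        ((MvPolynomial.X 1 ^ m - MvPolynomial.X 0 ^ n) ^ d : MvPolynomial (Fin 2) ℂ) := by
    simp only [map_pow, map_sub, MvPolynomial.coeToMvPowerSeries.ringHom_apply,
      MvPolynomial.coe_X]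
  rw [hpoly, MvPolynomial.coeToMvPowerSeries.ringHom_apply, mvEval_coe hx hy]
  simp

end mvEval

theorem stmt6_general (m n d' : ℕ) (hm : 0 < m) (hn : 0 < n) (hmn : Nat.Coprime m n)
    (g : MvPowerSeries (Fin 2) ℂ)
    (hg : ∀ d : Fin 2 →₀ ℕ, MvPowerSeries.coeff d g ≠ 0 →
        m * n * d' < m * d 0 + n * d 1)
    (f : MvPowerSeries (Fin 2) ℂ)
    (hf : f = (MvPowerSeries.X 1 ^ m - MvPowerSeries.X 0 ^ n) ^ d' + g)
    (x y : PowerSeries ℂ)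
    (hx0 : PowerSeries.constantCoeff x = 0) (hy0 : PowerSeries.constantCoeff y = 0)
    (hxy : ¬(x = 0 ∧ y = 0))
    (hnoC : ¬ ∃ p : ℕ, 0 < p ∧ x.order = (m * p : ℕ) ∧ y.order = (n * p : ℕ) ∧
        (PowerSeries.coeff (n * p) y) ^ m = (PowerSeries.coeff (m * p) x) ^ n) :
    ((y ^ m - x ^ n) ^ d').order < (mvEval f x y - (y ^ m - x ^ n) ^ d').order ∧
    (mvEval f x y).order = ((y ^ m - x ^ n) ^ d').order ∧
    ∀ N : ℕ, ((y ^ m - x ^ n) ^ d').order = N →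
      PowerSeries.coeff N (mvEval f x y) =
        PowerSeries.coeff N ((y ^ m - x ^ n) ^ d') := by
  obtain ⟨μ, hμpos, hμx, hμy, hμ⟩ :=
    exists_order_pow_sub_pow_eq hm hn hmn hx0 hy0 hxy hnoC
  have hpow : ((y ^ m - x ^ n) ^ d').order = (d' * μ : ℕ) := by
    rw [order_pow, hμ, nsmul_eq_mul, Nat.cast_mul]
  have hG : ((d' * μ : ℕ) : ℕ∞) < (mvEval g x y).order :=
    lt_order_mvEval fun d hd => lt_order_pow_mul_pow hμx hμy <| by
      rw [← mul_assoc]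
      exact Nat.mul_lt_mul_of_pos_right (hg d hd) hμpos
  rw [hf, mvEval_add, mvEval_pow_sub_pow hx0 hy0, add_sub_cancel_left, hpow]
  refine ⟨hG, ?_, fun N hN => ?_⟩
  · rw [order_add_of_order_ne _ _ (by rw [hpow]; exact hG.ne), hpow, min_eq_left hG.le]
  · have hGN : (N : ℕ∞) < (mvEval g x y).order := hN ▸ hG
    rw [map_add, coeff_of_lt_order N hGN, add_zero]

/-- Let `m` and `n` be coprime positive integers, let `d′` be a positive integer, and let
`g ∈ ℂ[[X,Y]]` be such that every monomial `X^a·Y^b` occurring in `g` with nonzero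
coefficient satisfies `m·a + n·b > m·n·d′`.  Set `f = (Y^m − X^n)^{d′} + g`.  Let
`x, y ∈ ℂ[[t]]` have zero constant term, not both zero, and assume there is no positive
integer `p` such that `ord x = m·p`, `ord y = n·p` and the leading coefficients satisfy
`y₀^m = x₀^n`.  Then `ord(f(x,y) − (y^m − x^n)^{d′}) > ord((y^m − x^n)^{d′})`; in
particular `f(x,y)` and `(y^m − x^n)^{d′}` have the same order and the same leading
coefficient. -/
theorem stmt6 (m n d' : ℕ) (hm : 0 < m) (hn : 0 < n) (hmn : Nat.Coprime m n)
    (hd' : 0 < d')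
    (g : MvPowerSeries (Fin 2) ℂ)
    (hg : ∀ d : Fin 2 →₀ ℕ, MvPowerSeries.coeff d g ≠ 0 →
        m * n * d' < m * d 0 + n * d 1)
    (f : MvPowerSeries (Fin 2) ℂ)
    (hf : f = (MvPowerSeries.X 1 ^ m - MvPowerSeries.X 0 ^ n) ^ d' + g)
    (x y : PowerSeries ℂ)
    (hx0 : PowerSeries.constantCoeff x = 0) (hy0 : PowerSeries.constantCoeff y = 0)
    (hxy : ¬(x = 0 ∧ y = 0))
    (hnoC : ¬ ∃ p : ℕ, 0 < p ∧ x.order = (m * p : ℕ) ∧ y.order = (n * p : ℕ) ∧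
        (PowerSeries.coeff (n * p) y) ^ m = (PowerSeries.coeff (m * p) x) ^ n) :
    ((y ^ m - x ^ n) ^ d').order < (mvEval f x y - (y ^ m - x ^ n) ^ d').order ∧
    (mvEval f x y).order = ((y ^ m - x ^ n) ^ d').order ∧
    ∀ N : ℕ, ((y ^ m - x ^ n) ^ d').order = N →
      PowerSeries.coeff N (mvEval f x y) =
        PowerSeries.coeff N ((y ^ m - x ^ n) ^ d') :=
  stmt6_general m n d' hm hn hmn g hg f hf x y hx0 hy0 hxy hnoC
end

section
/- Let m, n, d′ be positive integers and let a₀, …, a_{d′−1} ∈ ℂ[[X]] be one-variable power series with ord a_i > m·n·(d′ − i) for each i. Set f′(X,Y) = Y^{d′} + Σ_{i=0}^{d′−1} a_i(X)·Y^i. Let x, y ∈ ℂ[[t]] be power series with zero constant term such that y ≠ 0 and ord y ≤ m·n·ord x (with the convention ord 0 = ∞, so that the case x = 0 is allowed). Then ord( f′(x,y) − y^{d′} ) > d′·ord y; in particular f′(x,y) has order d′·ord y and its leading coefficient is y₀^{d′}, where y₀ is the leading coefficient of y. -/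
/-!
Substitution multiplies orders, `ord aᵢ(x) ≥ ord aᵢ · ord x`, and `ord x ≥ 1`, so
`ord aᵢ(x) > m·n·(d′ − i)·ord x ≥ (d′ − i)·ord y`. Hence every term `aᵢ(x)·yⁱ` has order
`> d′·ord y`, and `f′(x,y)` agrees with `y^{d′}` up to and including degree `d′·ord y`.
-/

open PowerSeries

/-- Composition `F(x)` of one-variable formal power series.  (The formula below computes
the correct substitution whenever `x` has zero constant term: the coefficient of `t^k` in
`F(x)` only receives contributions from the terms of `F` of degree at most `k`.) -/
noncomputable def psEval (F : PowerSeries ℂ) (x : PowerSeries ℂ) : PowerSeries ℂ :=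
  PowerSeries.mk fun k =>
    ∑ j ∈ Finset.range (k + 1), PowerSeries.coeff j F * PowerSeries.coeff k (x ^ j)

namespace PowerSeries

theorem coeff_pow_mul_order_toNat {R : Type*} [CommSemiring R] (φ : R⟦X⟧) (n : ℕ) :
    coeff (n * φ.order.toNat) (φ ^ n) = coeff φ.order.toNat φ ^ n := by
  have hφ : φ ^ n = X ^ (φ.order.toNat * n) * φ.divXPowOrder ^ n := by
    rw [pow_mul, ← mul_pow, X_pow_order_mul_divXPowOrder]
  have hcoeff := coeff_X_pow_mul (φ.divXPowOrder ^ n) (φ.order.toNat * n) 0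
  rw [zero_add] at hcoeff
  rw [hφ, mul_comm n, hcoeff, coeff_zero_eq_constantCoeff_apply, map_pow,
    constantCoeff_divXPowOrder]

theorem natCast_lt_order_sum {R ι : Type*} [Semiring R] (s : Finset ι) (f : ι → R⟦X⟧) {n : ℕ}
    (h : ∀ i ∈ s, (n : ℕ∞) < (f i).order) : (n : ℕ∞) < (∑ i ∈ s, f i).order :=
  Finset.sum_induction f (fun φ ↦ (n : ℕ∞) < φ.order)
    (fun _ _ hφ hψ ↦ (lt_min hφ hψ).trans_le (min_order_le_order_add _ _))
    (by simp) h

end PowerSeries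

theorem order_mul_order_le_order_psEval (F x : ℂ⟦X⟧) :
    F.order * x.order ≤ (psEval F x).order := by
  refine le_order _ _ fun k hk ↦ ?_
  rw [psEval, coeff_mk]
  refine Finset.sum_eq_zero fun j _ ↦ ?_
  rcases lt_or_ge (j : ℕ∞) F.order with hj | hj
  · rw [coeff_of_lt_order j hj, zero_mul]
  · have : (k : ℕ∞) < (x ^ j).order :=
      calc (k : ℕ∞) < F.order * x.order := hk
        _ ≤ j • x.order := by rw [nsmul_eq_mul]; gcongr
        _ ≤ (x ^ j).order := le_order_pow x j
    rw [coeff_of_lt_order k this, mul_zero]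

theorem lt_order_psEval_mul_pow {A x y : ℂ⟦X⟧} {c k i q : ℕ}
    (hA : ((c * k : ℕ) : ℕ∞) < A.order) (hx : constantCoeff x = 0) (hq : y.order = q)
    (hy : (q : ℕ∞) ≤ (c : ℕ∞) * x.order) :
    (((k + i) * q : ℕ) : ℕ∞) < (psEval A x * y ^ i).order := by
  have hx1 : 1 ≤ x.order := one_le_order_iff_constCoeff_eq_zero.mpr hx
  have hA1 : ((c * k + 1 : ℕ) : ℕ∞) ≤ A.order := Order.add_one_le_of_lt hA
  calc (((k + i) * q : ℕ) : ℕ∞) < (((k + i) * q + 1 : ℕ) : ℕ∞) := by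
        exact_mod_cast Nat.lt_succ_self _
    _ = (k : ℕ∞) * q + 1 + i * q := by push_cast; ring
    _ ≤ (k : ℕ∞) * ((c : ℕ∞) * x.order) + x.order + i • y.order := by
        rw [hq, nsmul_eq_mul]; gcongr
    _ = ((c * k + 1 : ℕ) : ℕ∞) * x.order + i • y.order := by push_cast; ring
    _ ≤ A.order * x.order + (y ^ i).order := by gcongr; exact le_order_pow y i
    _ ≤ (psEval A x).order + (y ^ i).order := by gcongr; exact order_mul_order_le_order_psEval A x
    _ ≤ (psEval A x * y ^ i).order := le_order_mul _ _

theorem stmt9_general (m n d' : ℕ)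
    (a : ℕ → PowerSeries ℂ)
    (ha : ∀ i < d', ((m * n * (d' - i) : ℕ) : ℕ∞) < (a i).order)
    (x y : PowerSeries ℂ)
    (hx0 : PowerSeries.constantCoeff x = 0)
    (hy : y ≠ 0) (hord : y.order ≤ ((m * n : ℕ) : ℕ∞) * x.order)
    (F : PowerSeries ℂ)
    (hF : F = y ^ d' + ∑ i ∈ Finset.range d', psEval (a i) x * y ^ i) :
    (d' : ℕ∞) * y.order < (F - y ^ d').order ∧
    F.order = (d' : ℕ∞) * y.order ∧
    ∀ q : ℕ, y.order = q →
      PowerSeries.coeff (d' * q) F = (PowerSeries.coeff q y) ^ d' := by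
  obtain ⟨q, hq⟩ : ∃ q : ℕ, y.order = q :=
    ENat.ne_top_iff_exists.mp (order_eq_top.not.mpr hy) |>.imp fun _ ↦ Eq.symm
  set R := ∑ i ∈ Finset.range d', psEval (a i) x * y ^ i
  have hFR : F - y ^ d' = R := by rw [hF, add_sub_cancel_left]
  have hR : ((d' * q : ℕ) : ℕ∞) < R.order := by
    refine natCast_lt_order_sum _ _ fun i hi ↦ ?_
    have hi : i < d' := Finset.mem_range.mp hi
    simpa only [Nat.sub_add_cancel hi.le] using
      lt_order_psEval_mul_pow (i := i) (ha i hi) hx0 hq (hq ▸ hord)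
  have hdq : (d' : ℕ∞) * y.order = ((d' * q : ℕ) : ℕ∞) := by rw [hq, Nat.cast_mul]
  have hpow : (y ^ d').order = ((d' * q : ℕ) : ℕ∞) := by rw [order_pow, nsmul_eq_mul, hdq]
  refine ⟨hdq ▸ hFR ▸ hR, ?_, fun q' hq' ↦ ?_⟩
  · rw [hF, order_add_of_order_ne _ _ (hpow ▸ hR.ne), hpow, hdq, min_eq_left hR.le]
  · obtain rfl : q' = q := by exact_mod_cast hq'.symm.trans hq
    have hq'q : y.order.toNat = q' := by rw [hq', ENat.toNat_natCast]
    rw [hF, map_add, coeff_of_lt_order _ hR, add_zero, ← hq'q, coeff_pow_mul_order_toNat]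

/-- Let `m, n, d′` be positive integers and let `a₀, …, a_{d′−1} ∈ ℂ[[X]]` satisfy
`ord aᵢ > m·n·(d′ − i)`.  Set `f′(X,Y) = Y^{d′} + Σ aᵢ(X)·Yⁱ`.  Let `x, y ∈ ℂ[[t]]` have
zero constant term, with `y ≠ 0` and `ord y ≤ m·n·ord x` (convention `ord 0 = ∞`, so
`x = 0` is allowed).  Then `ord(f′(x,y) − y^{d′}) > d′·ord y`; in particular `f′(x,y)` has
order `d′·ord y` and its leading coefficient is `y₀^{d′}` where `y₀` is the leading
coefficient of `y`. -/
theorem stmt9 (m n d' : ℕ) (hm : 0 < m) (hn : 0 < n) (hd' : 0 < d')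
    (a : ℕ → PowerSeries ℂ)
    (ha : ∀ i < d', ((m * n * (d' - i) : ℕ) : ℕ∞) < (a i).order)
    (x y : PowerSeries ℂ)
    (hx0 : PowerSeries.constantCoeff x = 0) (hy0 : PowerSeries.constantCoeff y = 0)
    (hy : y ≠ 0) (hord : y.order ≤ ((m * n : ℕ) : ℕ∞) * x.order)
    (F : PowerSeries ℂ)
    (hF : F = y ^ d' + ∑ i ∈ Finset.range d', psEval (a i) x * y ^ i) :
    (d' : ℕ∞) * y.order < (F - y ^ d').order ∧
    F.order = (d' : ℕ∞) * y.order ∧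
    ∀ q : ℕ, y.order = q →
      PowerSeries.coeff (d' * q) F = (PowerSeries.coeff q y) ^ d' :=
  stmt9_general m n d' a ha x y hx0 hy hord F hF
end

section
/- Let m, n, d′ be positive integers and let a₀, …, a_{d′−1} ∈ ℂ[[X]] be one-variable power series with ord a_i > m·n·(d′ − i) for each i. Set f′(X,Y) = Y^{d′} + Σ_{i=0}^{d′−1} a_i(X)·Y^i. Then for every positive integer N, the set of pairs (x,y) of power series in ℂ[[t]] with zero constant term satisfying y ≠ 0 and ord y ≤ m·n·ord x (convention ord 0 = ∞) such that f′(x,y) has the form t^N plus terms of order greater than N is equal to the set of such pairs for which y^{d′} has the form t^N plus terms of order greater than N. -/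
/-!
Write `e = ord y`. Since `ord y ≤ m·n·ord x` and `ord aⱼ > m·n·(d′ − j)`, each correction term
`aⱼ(x)·yʲ` has order at least `ord aⱼ · ord x + j·e > (d′ − j)·e + j·e = d′·e = ord y^{d′}`.
So `f′(x,y)` and `y^{d′}` agree in all coefficients up to index `d′·e`, and each of the two
conditions forces `N` to be this common order.
-/

open PowerSeries

theorem ENat.natCast_lt_mul_of_le_mul {k c : ℕ} {a b : ℕ∞} (hk : (k : ℕ∞) ≤ c * b)
    (hca : (c : ℕ∞) < a) (hb : b ≠ 0) : (k : ℕ∞) < a * b := by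
  induction b using ENat.recTopCoe with
  | top => simp [ENat.mul_top (pos_of_gt hca).ne']
  | coe b =>
    calc (k : ℕ∞) ≤ c * b := hk
      _ < (c + 1) * b := by
        norm_cast
        exact Nat.mul_lt_mul_of_pos_right c.lt_succ_self
          (Nat.pos_of_ne_zero (by exact_mod_cast hb))
      _ ≤ a * b := mul_le_mul_left (Order.add_one_le_of_lt hca) _

namespace PowerSeries

variable {R : Type*} [Semiring R]

theorem lt_order_sum {ι : Type*} {s : Finset ι} {φ : ι → R⟦X⟧} {c : ℕ}
    (h : ∀ i ∈ s, (c : ℕ∞) < (φ i).order) : (c : ℕ∞) < (∑ i ∈ s, φ i).order :=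
  Finset.sum_induction φ (fun ψ => (c : ℕ∞) < ψ.order)
    (fun _ _ hφ hψ => (lt_min hφ hψ).trans_le (min_order_le_order_add _ _))
    (by simp) h

theorem coeff_lt_eq_zero_and_coeff_eq_one_add_iff {φ ψ : R⟦X⟧} (h : φ.order < ψ.order)
    (N : ℕ) :
    ((∀ i < N, coeff i (φ + ψ) = 0) ∧ coeff N (φ + ψ) = 1) ↔
      ((∀ i < N, coeff i φ = 0) ∧ coeff N φ = 1) := by
  have agree (hN : (N : ℕ∞) ≤ φ.order) (i : ℕ) (hi : i ≤ N) :
      coeff i (φ + ψ) = coeff i φ := by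
    rw [map_add, coeff_of_lt_order i ((Nat.cast_le.2 hi).trans hN |>.trans_lt h), add_zero]
  have order_add : (φ + ψ).order = φ.order := by
    rw [order_add_of_order_ne _ _ h.ne, min_eq_left h.le]
  constructor
  · rintro ⟨hlow, hN⟩
    have := agree (order_add ▸ nat_le_order _ N hlow)
    exact ⟨fun i hi => this i hi.le ▸ hlow i hi, this N le_rfl ▸ hN⟩
  · rintro ⟨hlow, hN⟩
    have := agree (nat_le_order _ N hlow)
    exact ⟨fun i hi => (this i hi.le).symm ▸ hlow i hi, (this N le_rfl).symm ▸ hN⟩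

end PowerSeries

theorem order_pow_lt_order_sum_psEval_mul_pow {k d : ℕ} {a : ℕ → ℂ⟦X⟧}
    (ha : ∀ i < d, ((k * (d - i) : ℕ) : ℕ∞) < (a i).order) {x y : ℂ⟦X⟧}
    (hx : constantCoeff x = 0) (hy : y ≠ 0) (hord : y.order ≤ (k : ℕ∞) * x.order) :
    (y ^ d).order < (∑ j ∈ Finset.range d, psEval (a j) x * y ^ j).order := by
  obtain ⟨e, he⟩ := ENat.ne_top_iff_exists.1 (order_eq_top.not.2 hy)
  rw [order_pow, ← he, nsmul_eq_mul, ← Nat.cast_mul]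
  refine lt_order_sum fun j hj => ?_
  rw [Finset.mem_range] at hj
  have hx0 : x.order ≠ 0 := order_ne_zero_iff_constCoeff_eq_zero.2 hx
  have hpsEval : (((d - j) * e : ℕ) : ℕ∞) < (psEval (a j) x).order := by
    refine (ENat.natCast_lt_mul_of_le_mul ?_ (ha j hj) hx0).trans_le
      (order_mul_order_le_order_psEval _ _)
    calc (((d - j) * e : ℕ) : ℕ∞) = (d - j : ℕ) * y.order := by push_cast [he]; rfl
      _ ≤ (d - j : ℕ) * (k * x.order) := mul_le_mul_right hord _
      _ = (k * (d - j) : ℕ) * x.order := by push_cast; ring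
  calc ((d * e : ℕ) : ℕ∞) = (((d - j) * e : ℕ) : ℕ∞) + (j * e : ℕ) := by
        rw [← Nat.cast_add, ← add_mul, Nat.sub_add_cancel hj.le]
    _ < (psEval (a j) x).order + (j * e : ℕ) :=
        (ENat.add_lt_add_iff_right (ENat.natCast_ne_top _)).2 hpsEval
    _ = (psEval (a j) x * y ^ j).order := by
        rw [order_mul, order_pow, ← he, nsmul_eq_mul, Nat.cast_mul]

theorem stmt10_general (m n d' : ℕ)
    (a : ℕ → PowerSeries ℂ)
    (ha : ∀ i < d', ((m * n * (d' - i) : ℕ) : ℕ∞) < (a i).order)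
    (N : ℕ) :
    {xy : PowerSeries ℂ × PowerSeries ℂ |
        PowerSeries.constantCoeff xy.1 = 0 ∧ PowerSeries.constantCoeff xy.2 = 0 ∧
        xy.2 ≠ 0 ∧ xy.2.order ≤ ((m * n : ℕ) : ℕ∞) * xy.1.order ∧
        (∀ i < N, PowerSeries.coeff i
            (xy.2 ^ d' + ∑ j ∈ Finset.range d', psEval (a j) xy.1 * xy.2 ^ j) = 0) ∧
        PowerSeries.coeff N
            (xy.2 ^ d' + ∑ j ∈ Finset.range d', psEval (a j) xy.1 * xy.2 ^ j) = 1} =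
    {xy : PowerSeries ℂ × PowerSeries ℂ |
        PowerSeries.constantCoeff xy.1 = 0 ∧ PowerSeries.constantCoeff xy.2 = 0 ∧
        xy.2 ≠ 0 ∧ xy.2.order ≤ ((m * n : ℕ) : ℕ∞) * xy.1.order ∧
        (∀ i < N, PowerSeries.coeff i (xy.2 ^ d') = 0) ∧
        PowerSeries.coeff N (xy.2 ^ d') = 1} := by
  ext ⟨x, y⟩
  refine and_congr_right fun hx => and_congr_right fun _ => and_congr_right fun hy =>
    and_congr_right fun hord => ?_
  exact coeff_lt_eq_zero_and_coeff_eq_one_add_iff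
    (order_pow_lt_order_sum_psEval_mul_pow ha hx hy hord) N

/-- Let `m, n, d′` be positive integers and let `a₀, …, a_{d′−1} ∈ ℂ[[X]]` satisfy
`ord aᵢ > m·n·(d′ − i)`.  Set `f′(X,Y) = Y^{d′} + Σ aᵢ(X)·Yⁱ`.  Then for every positive
integer `N`, the pairs `(x,y)` of power series with zero constant term satisfying `y ≠ 0`
and `ord y ≤ m·n·ord x` (convention `ord 0 = ∞`) for which `f′(x,y) = t^N + (higher order)`
are exactly the pairs of that kind for which `y^{d′} = t^N + (higher order)`. -/
theorem stmt10 (m n d' : ℕ) (hm : 0 < m) (hn : 0 < n) (hd' : 0 < d')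
    (a : ℕ → PowerSeries ℂ)
    (ha : ∀ i < d', ((m * n * (d' - i) : ℕ) : ℕ∞) < (a i).order)
    (N : ℕ) (hN : 0 < N) :
    {xy : PowerSeries ℂ × PowerSeries ℂ |
        PowerSeries.constantCoeff xy.1 = 0 ∧ PowerSeries.constantCoeff xy.2 = 0 ∧
        xy.2 ≠ 0 ∧ xy.2.order ≤ ((m * n : ℕ) : ℕ∞) * xy.1.order ∧
        (∀ i < N, PowerSeries.coeff i
            (xy.2 ^ d' + ∑ j ∈ Finset.range d', psEval (a j) xy.1 * xy.2 ^ j) = 0) ∧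
        PowerSeries.coeff N
            (xy.2 ^ d' + ∑ j ∈ Finset.range d', psEval (a j) xy.1 * xy.2 ^ j) = 1} =
    {xy : PowerSeries ℂ × PowerSeries ℂ |
        PowerSeries.constantCoeff xy.1 = 0 ∧ PowerSeries.constantCoeff xy.2 = 0 ∧
        xy.2 ≠ 0 ∧ xy.2.order ≤ ((m * n : ℕ) : ℕ∞) * xy.1.order ∧
        (∀ i < N, PowerSeries.coeff i (xy.2 ^ d') = 0) ∧
        PowerSeries.coeff N (xy.2 ^ d') = 1} :=
  stmt10_general m n d' a ha N
end

section
/- Let h, u ∈ ℂ[[X,Y]] be formal power series in two variables with u(0,0) ≠ 0 and h(0,0) = 0, and set g = u·h. Then for every positive integer N there is a bijection between the jet spaces X_{N,1}(g) and X_{N,1}(h). -/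
/-!
Substituting a jet `(x, y)` is a ring homomorphism, so `g(x,y) = u(x,y) · h(x,y)` with
`u(x,y)` a unit of constant term `u(0,0)`. Hence `g(x,y) ≡ t^N` iff `h(x,y) ≡ u(0,0)⁻¹ t^N`
modulo `t^(N+1)`. Choosing `λ` with `λ^N = u(0,0)`, the reparametrisation `t ↦ λ t` multiplies
the `t^N` coefficient by `λ^N` and kills no lower coefficient, so
`(x(t), y(t)) ↦ (x(λt), y(λt))` maps `X_{N,1}(g)` bijectively onto `X_{N,1}(h)`.
-/

open PowerSeries

/-- The jet space `X_{N,1}(F)`: pairs of polynomials `(x,y)` of degree at most `N` with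
zero constant term such that `F(x(t),y(t)) ≡ t^N (mod t^{N+1})`. -/
noncomputable def jetSpace (N : ℕ) (F : MvPowerSeries (Fin 2) ℂ) :
    Set (Polynomial ℂ × Polynomial ℂ) :=
  {xy | xy.1.degree ≤ N ∧ xy.2.degree ≤ N ∧ xy.1.coeff 0 = 0 ∧ xy.2.coeff 0 = 0 ∧
    (∀ i < N, PowerSeries.coeff i
        (mvEval F (xy.1 : PowerSeries ℂ) (xy.2 : PowerSeries ℂ)) = 0) ∧
    PowerSeries.coeff N
        (mvEval F (xy.1 : PowerSeries ℂ) (xy.2 : PowerSeries ℂ)) = 1}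

theorem PowerSeries.coeff_pow_mul_pow_of_lt_s11 {R : Type*} [CommRing R] {x y : R⟦X⟧}
    (hx : constantCoeff x = 0) (hy : constantCoeff y = 0) {a b k : ℕ} (hk : k < a + b) :
    coeff k (x ^ a * y ^ b) = 0 := by
  have hdvd : (X : R⟦X⟧) ^ (a + b) ∣ x ^ a * y ^ b := by
    rw [pow_add]
    exact mul_dvd_mul (pow_dvd_pow_of_dvd (X_dvd_iff.mpr hx) a)
      (pow_dvd_pow_of_dvd (X_dvd_iff.mpr hy) b)
  exact X_pow_dvd_iff.mp hdvd k hk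

theorem Finsupp.single_zero_add_single_one {M : Type*} [AddZeroClass M] (d : Fin 2 →₀ M) :
    single 0 (d 0) + single 1 (d 1) = d := by
  ext i
  fin_cases i <;> simp

theorem MvPowerSeries.hasSubst_pair {R : Type*} [CommRing R] {x y : R⟦X⟧}
    (hx : constantCoeff x = 0) (hy : constantCoeff y = 0) : HasSubst ![x, y] :=
  hasSubst_of_constantCoeff_zero fun s => by fin_cases s <;> assumption

/- `mvEval` truncates the double sum at exponents `k`, which is harmless only because
`x ^ a * y ^ b` has order at least `a + b`. -/
theorem mvEval_eq_subst (F : MvPowerSeries (Fin 2) ℂ) {x y : ℂ⟦X⟧}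
    (hx : constantCoeff x = 0) (hy : constantCoeff y = 0) :
    mvEval F x y = MvPowerSeries.subst ![x, y] F := by
  ext k
  let pair : ℕ × ℕ → Fin 2 →₀ ℕ := fun ab => Finsupp.single 0 ab.1 + Finsupp.single 1 ab.2
  have pair_inj : Function.Injective pair := by
    intro ab cd h
    have h0 := congrArg (· 0) h
    have h1 := congrArg (· 1) h
    simp only [pair, Finsupp.add_apply, Finsupp.single_apply] at h0 h1
    exact Prod.ext (by simpa using h0) (by simpa using h1)
  conv_rhs =>
    rw [PowerSeries.coeff, MvPowerSeries.coeff_subst (MvPowerSeries.hasSubst_pair hx hy)]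
  rw [finsum_eq_sum_of_support_subset _
      (s := (Finset.range (k + 1) ×ˢ Finset.range (k + 1)).image pair),
    Finset.sum_image pair_inj.injOn]
  · simp [mvEval, pair, Finsupp.prod_fintype _ _ (fun _ => pow_zero _)]
  · intro d hd
    have hle : d 0 + d 1 ≤ k := by
      by_contra hlt
      apply hd
      simp only [Finsupp.prod_fintype _ _ (fun _ => pow_zero _), Fin.prod_univ_two]
      exact smul_eq_zero_of_right _ (PowerSeries.coeff_pow_mul_pow_of_lt_s11 hx hy (by omega))
    simp only [Finset.coe_image, Set.mem_image, Finset.mem_coe, Finset.mem_product,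
      Finset.mem_range]
    exact ⟨(d 0, d 1), ⟨by omega, by omega⟩, Finsupp.single_zero_add_single_one d⟩

theorem mvEval_mul (F G : MvPowerSeries (Fin 2) ℂ) {x y : ℂ⟦X⟧}
    (hx : constantCoeff x = 0) (hy : constantCoeff y = 0) :
    mvEval (F * G) x y = mvEval F x y * mvEval G x y := by
  simp only [mvEval_eq_subst _ hx hy,
    MvPowerSeries.subst_mul (MvPowerSeries.hasSubst_pair hx hy)]

theorem constantCoeff_mvEval (F : MvPowerSeries (Fin 2) ℂ) (x y : ℂ⟦X⟧) :
    constantCoeff (mvEval F x y) = MvPowerSeries.constantCoeff F := by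
  rw [← coeff_zero_eq_constantCoeff_apply]
  simp [mvEval]

theorem mvEval_rescale (F : MvPowerSeries (Fin 2) ℂ) (x y : ℂ⟦X⟧) (a : ℂ) :
    mvEval F (rescale a x) (rescale a y) = rescale a (mvEval F x y) := by
  ext k
  simp only [mvEval, coeff_mk, coeff_rescale, Finset.mul_sum, ← map_pow, ← map_mul]
  exact Finset.sum_congr rfl fun _ _ => by ring

namespace PowerSeries

variable {R : Type*} [CommRing R]

/-- `P = c X ^ N + O(X ^ (N + 1))`. -/
def HasInitialTerm (N : ℕ) (c : R) (P : R⟦X⟧) : Prop :=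
  (∀ i < N, coeff i P = 0) ∧ coeff N P = c

theorem hasInitialTerm_iff_X_pow_dvd {N : ℕ} {c : R} {P : R⟦X⟧} :
    HasInitialTerm N c P ↔ X ^ N ∣ P ∧ coeff N P = c := by
  rw [HasInitialTerm, X_pow_dvd_iff]

theorem coeff_mul_of_X_pow_dvd (U : R⟦X⟧) {N : ℕ} {P : R⟦X⟧} (hP : X ^ N ∣ P) :
    coeff N (U * P) = constantCoeff U * coeff N P := by
  obtain ⟨Q, rfl⟩ := hP
  simp only [mul_left_comm U, coeff_X_pow_mul', le_refl, if_true, Nat.sub_self,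
    coeff_zero_eq_constantCoeff_apply, map_mul]

theorem hasInitialTerm_mul_iff {U P : R⟦X⟧} (hU : IsUnit (constantCoeff U)) (N : ℕ) (c : R) :
    HasInitialTerm N (constantCoeff U * c) (U * P) ↔ HasInitialTerm N c P := by
  rw [hasInitialTerm_iff_X_pow_dvd, hasInitialTerm_iff_X_pow_dvd,
    (isUnit_iff_constantCoeff.mpr hU).dvd_mul_left]
  refine and_congr_right fun hP => ?_
  rw [coeff_mul_of_X_pow_dvd U hP]
  exact ⟨fun h => hU.mul_left_cancel h, congrArg _⟩

theorem hasInitialTerm_rescale_iff {a : R} (ha : IsUnit a) (N : ℕ) (c : R) (P : R⟦X⟧) :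
    HasInitialTerm N (a ^ N * c) (rescale a P) ↔ HasInitialTerm N c P := by
  simp only [HasInitialTerm, coeff_rescale, (ha.pow _).mul_right_eq_zero]
  exact and_congr_right fun _ => ⟨fun h => (ha.pow N).mul_left_cancel h, congrArg _⟩

end PowerSeries

namespace Polynomial

variable {R : Type*} [CommRing R]

noncomputable def rescaleEquiv (a : Rˣ) : R[X] ≃ R[X] where
  toFun p := p.comp (C (a : R) * X)
  invFun p := p.comp (C (↑a⁻¹ : R) * X)
  left_inv p := by ext n; simp [mul_assoc, ← mul_pow]
  right_inv p := by ext n; simp [mul_assoc, ← mul_pow]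

theorem coeff_rescaleEquiv (a : Rˣ) (p : R[X]) (n : ℕ) :
    (rescaleEquiv a p).coeff n = p.coeff n * (a : R) ^ n :=
  comp_C_mul_X_coeff

theorem coe_rescaleEquiv (a : Rˣ) (p : R[X]) :
    (rescaleEquiv a p : R⟦X⟧) = PowerSeries.rescale (a : R) p := by
  ext n
  rw [coeff_coe, coeff_rescaleEquiv, PowerSeries.coeff_rescale, coeff_coe, mul_comm]

theorem degree_rescaleEquiv_le_iff (a : Rˣ) (p : R[X]) (N : WithBot ℕ) :
    (rescaleEquiv a p).degree ≤ N ↔ p.degree ≤ N := by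
  simp only [degree_le_iff_coeff_zero, coeff_rescaleEquiv, (a.isUnit.pow _).mul_left_eq_zero]

end Polynomial

theorem mem_jetSpace_iff (N : ℕ) (F : MvPowerSeries (Fin 2) ℂ) (p q : Polynomial ℂ) :
    (p, q) ∈ jetSpace N F ↔ p.degree ≤ N ∧ q.degree ≤ N ∧ p.coeff 0 = 0 ∧ q.coeff 0 = 0 ∧
      HasInitialTerm N 1 (mvEval F p q) :=
  Iff.rfl

theorem hasInitialTerm_mvEval_mul_iff {u : MvPowerSeries (Fin 2) ℂ} {a : ℂˣ} {N : ℕ}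
    (ha : (a : ℂ) ^ N = MvPowerSeries.constantCoeff u) (h : MvPowerSeries (Fin 2) ℂ)
    {x y : ℂ⟦X⟧} (hx : constantCoeff x = 0) (hy : constantCoeff y = 0) :
    HasInitialTerm N 1 (mvEval (u * h) x y) ↔
      HasInitialTerm N 1 (mvEval h (rescale (a : ℂ) x) (rescale (a : ℂ) y)) := by
  have hu : constantCoeff (mvEval u x y) = (a : ℂ) ^ N := by rw [constantCoeff_mvEval, ha]
  have hunit : IsUnit ((a : ℂ) ^ N) := (a ^ N).isUnit
  have key := (hasInitialTerm_mul_iff (hu ▸ hunit) N ((a : ℂ) ^ N)⁻¹).trans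
    (hasInitialTerm_rescale_iff a.isUnit N ((a : ℂ) ^ N)⁻¹ (mvEval h x y)).symm
  rwa [hu, mul_inv_cancel₀ hunit.ne_zero, ← mvEval_mul u h hx hy, ← mvEval_rescale] at key

theorem mem_jetSpace_mul_iff {u : MvPowerSeries (Fin 2) ℂ} {a : ℂˣ} {N : ℕ}
    (ha : (a : ℂ) ^ N = MvPowerSeries.constantCoeff u) (h : MvPowerSeries (Fin 2) ℂ)
    (xy : Polynomial ℂ × Polynomial ℂ) :
    xy ∈ jetSpace N (u * h) ↔
      (Polynomial.rescaleEquiv a).prodCongr (Polynomial.rescaleEquiv a) xy ∈ jetSpace N h := by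
  obtain ⟨p, q⟩ := xy
  simp only [Equiv.prodCongr_apply, Prod.map, mem_jetSpace_iff,
    Polynomial.degree_rescaleEquiv_le_iff, Polynomial.coeff_rescaleEquiv, pow_zero, mul_one,
    Polynomial.coe_rescaleEquiv]
  refine and_congr_right fun _ => and_congr_right fun _ =>
    and_congr_right fun hp0 => and_congr_right fun hq0 => ?_
  exact hasInitialTerm_mvEval_mul_iff ha h (by rwa [Polynomial.constantCoeff_coe])
    (by rwa [Polynomial.constantCoeff_coe])

theorem stmt11_general (h u : MvPowerSeries (Fin 2) ℂ)
    (hu : MvPowerSeries.constantCoeff u ≠ 0)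
    (g : MvPowerSeries (Fin 2) ℂ) (hg : g = u * h)
    (N : ℕ) (hN : 0 < N) :
    Nonempty (jetSpace N g ≃ jetSpace N h) := by
  obtain ⟨a, ha⟩ := IsAlgClosed.exists_pow_nat_eq (MvPowerSeries.constantCoeff u) hN
  have ha0 : a ≠ 0 := by
    rintro rfl
    exact hu (ha ▸ zero_pow hN.ne')
  subst hg
  exact ⟨((Polynomial.rescaleEquiv (Units.mk0 a ha0)).prodCongr
    (Polynomial.rescaleEquiv (Units.mk0 a ha0))).subtypeEquiv (mem_jetSpace_mul_iff ha h)⟩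

/-- Let `h, u ∈ ℂ[[X,Y]]` with `u(0,0) ≠ 0` and `h(0,0) = 0`, and set `g = u·h`.  Then for
every positive integer `N` there is a bijection between the jet spaces `X_{N,1}(g)` and
`X_{N,1}(h)`. -/
theorem stmt11 (h u : MvPowerSeries (Fin 2) ℂ)
    (hu : MvPowerSeries.constantCoeff u ≠ 0)
    (hh : MvPowerSeries.constantCoeff h = 0)
    (g : MvPowerSeries (Fin 2) ℂ) (hg : g = u * h)
    (N : ℕ) (hN : 0 < N) :
    Nonempty (jetSpace N g ≃ jetSpace N h) :=
  stmt11_general h u hu g hg N hN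
end

section
/- Let m and n be coprime positive integers, let d′ and q be positive integers with n not dividing q, set N = m·d′·q and p = ⌈m·q/n⌉. Then the set of N-jets (x,y) with ord y = q and (y(t)^m − x(t)^n)^{d′} ≡ t^N (mod t^{N+1}) is in bijection with μ_{m·d′} × ℂ^{2N − p − q + 1}; explicitly, every jet in this set satisfies ord x ≥ p (allowing x = 0), the jet condition is equivalent to y_q^{m·d′} = 1 where y_q is the leading coefficient of y, and all remaining coefficients of x and y are free. -/
open Polynomial

section Helpers

lemma ordSpec {f : Polynomial ℂ} {k : ℕ} (h0 : ∀ i < k, f.coeff i = 0) (hk : f.coeff k ≠ 0) :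
    f.trailingDegree = (k : ℕ∞) ∧ f.trailingCoeff = f.coeff k := by
  have hf : f ≠ 0 := fun h => hk (by simp [h])
  have h1 : f.natTrailingDegree = k :=
    le_antisymm (natTrailingDegree_le_of_ne_zero hk) (le_natTrailingDegree hf h0)
  exact ⟨by rw [trailingDegree_eq_natTrailingDegree hf, h1],
    by rw [trailingCoeff, h1]⟩

lemma leTd {f : Polynomial ℂ} {k : ℕ} (h0 : ∀ i < k, f.coeff i = 0) :
    (k : ℕ∞) ≤ f.trailingDegree := by
  by_cases hf : f = 0
  · simp [hf]
  · rw [trailingDegree_eq_natTrailingDegree hf]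
    exact_mod_cast le_natTrailingDegree hf h0

lemma tdPow (f : Polynomial ℂ) (k : ℕ) :
    (f ^ k).trailingDegree = (k : ℕ∞) * f.trailingDegree := by
  induction k with
  | zero => simp [trailingDegree_one]
  | succ k ih =>
      rw [pow_succ, trailingDegree_mul, ih, Nat.cast_succ, add_mul, one_mul]

lemma tcPow (f : Polynomial ℂ) (k : ℕ) :
    (f ^ k).trailingCoeff = f.trailingCoeff ^ k := by
  induction k with
  | zero => simp [Polynomial.trailingCoeff, Polynomial.natTrailingDegree_one]
  | succ k ih => rw [pow_succ, trailingCoeff_mul, ih, pow_succ]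

lemma keyLemma (m n d' q N p : ℕ) (_hd' : 0 < d')
    (hN : N = m * d' * q) (hpq : m * q < n * p)
    (x y : Polynomial ℂ) (hy0 : ∀ i < q, y.coeff i = 0) (hyq : y.coeff q ≠ 0)
    (hx0 : ∀ i < p, x.coeff i = 0) :
    (∀ i < N, ((y ^ m - x ^ n) ^ d').coeff i = 0) ∧
      ((y ^ m - x ^ n) ^ d').coeff N = (y.coeff q) ^ (m * d') := by
  obtain ⟨hty, hcy⟩ := ordSpec hy0 hyq
  have htym : (y ^ m).trailingDegree = ((m * q : ℕ) : ℕ∞) := by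
    rw [tdPow, hty]; push_cast; ring
  have hcym : (y ^ m).trailingCoeff = (y.coeff q) ^ m := by
    rw [tcPow, hcy]
  have htx : ((m * q : ℕ) : ℕ∞) < (x ^ n).trailingDegree := by
    rw [tdPow]
    calc ((m * q : ℕ) : ℕ∞) < ((n * p : ℕ) : ℕ∞) := by exact_mod_cast hpq
    _ = (n : ℕ∞) * (p : ℕ∞) := by push_cast; ring
    _ ≤ (n : ℕ∞) * x.trailingDegree := by
        exact mul_le_mul_right (leTd hx0) _
  have hxn_coeff : ∀ i ≤ m * q, (x ^ n).coeff i = 0 := fun i hi =>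
    coeff_eq_zero_of_lt_trailingDegree (lt_of_le_of_lt (by exact_mod_cast hi) htx)
  have hu0 : ∀ i < m * q, (y ^ m - x ^ n).coeff i = 0 := by
    intro i hi
    rw [Polynomial.coeff_sub, hxn_coeff i (le_of_lt hi), sub_zero]
    exact coeff_eq_zero_of_lt_trailingDegree (by rw [htym]; exact_mod_cast hi)
  have hntym : (y ^ m).natTrailingDegree = m * q :=
    natTrailingDegree_eq_of_trailingDegree_eq_some htym
  have huq : (y ^ m - x ^ n).coeff (m * q) = (y.coeff q) ^ m := by
    rw [Polynomial.coeff_sub, hxn_coeff (m * q) le_rfl, sub_zero, ← hcym,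
      trailingCoeff, hntym]
  have huq' : (y ^ m - x ^ n).coeff (m * q) ≠ 0 := by
    rw [huq]; exact pow_ne_zero _ hyq
  obtain ⟨htu, hcu⟩ := ordSpec hu0 huq'
  have htv : ((y ^ m - x ^ n) ^ d').trailingDegree = ((N : ℕ) : ℕ∞) := by
    rw [tdPow, htu, hN]; push_cast; ring
  have hntv : ((y ^ m - x ^ n) ^ d').natTrailingDegree = N :=
    natTrailingDegree_eq_of_trailingDegree_eq_some htv
  constructor
  · intro i hi
    exact coeff_eq_zero_of_lt_trailingDegree (by rw [htv]; exact_mod_cast hi)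
  · have h : ((y ^ m - x ^ n) ^ d').coeff N = ((y ^ m - x ^ n) ^ d').trailingCoeff := by
      rw [trailingCoeff, hntv]
    rw [h, tcPow, hcu, huq, ← pow_mul]

noncomputable def phiPoly (a : ℕ) {k : ℕ} (c : Fin k → ℂ) : Polynomial ℂ :=
  ∑ i : Fin k, Polynomial.C (c i) * Polynomial.X ^ (a + (i : ℕ))

lemma phiPoly_coeff (a : ℕ) {k : ℕ} (c : Fin k → ℂ) (j : ℕ) :
    (phiPoly a c).coeff j =
      if h : a ≤ j ∧ j < a + k then c ⟨j - a, by omega⟩ else 0 := by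
  rw [phiPoly, Polynomial.finset_sum_coeff]
  simp only [Polynomial.coeff_C_mul, Polynomial.coeff_X_pow, mul_ite, mul_one, mul_zero]
  split_ifs with h
  · rw [Finset.sum_eq_single (⟨j - a, by omega⟩ : Fin k)]
    · simp only [if_pos (by omega : j = a + (j - a))]
    · intro b _ hb
      rw [if_neg]
      intro hj
      exact hb (by ext; simp; omega)
    · intro hmem; exact absurd (Finset.mem_univ _) hmem
  · apply Finset.sum_eq_zero
    intro b _
    rw [if_neg]
    intro hj
    omega

lemma phiPoly_coeff_eq (a : ℕ) {k : ℕ} (c : Fin k → ℂ) (i : Fin k) :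
    (phiPoly a c).coeff (a + i) = c i := by
  rw [phiPoly_coeff, dif_pos ⟨by omega, by omega⟩]
  congr 1
  ext
  simp

lemma degree_le_of_coeff_zero {f : Polynomial ℂ} {b : ℕ}
    (h : ∀ j, b < j → f.coeff j = 0) : f.degree ≤ (b : ℕ) := by
  rw [Polynomial.degree_le_iff_coeff_zero]
  intro j hj
  exact h j (by exact_mod_cast hj)

noncomputable def segEquiv (a b : ℕ) (hab : a ≤ b + 1) :
    {x : Polynomial ℂ // x.degree ≤ (b : ℕ) ∧ ∀ i < a, x.coeff i = 0} ≃
      (Fin (b + 1 - a) → ℂ) where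
  toFun x i := x.1.coeff (a + i)
  invFun c := ⟨phiPoly a c, by
      apply degree_le_of_coeff_zero
      intro j hj
      rw [phiPoly_coeff, dif_neg (by omega)], by
      intro i hi
      rw [phiPoly_coeff, dif_neg (by omega)]⟩
  left_inv := by
    rintro ⟨x, hdx, hlx⟩
    apply Subtype.ext
    apply Polynomial.ext
    intro j
    rw [phiPoly_coeff]
    split_ifs with h
    · show x.coeff (a + (j - a)) = x.coeff j
      congr 1; omega
    · rcases lt_or_ge j a with hj | hj
      · exact (hlx j hj).symm
      · refine (Polynomial.coeff_eq_zero_of_degree_lt (lt_of_le_of_lt hdx ?_)).symm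
        exact_mod_cast (by omega : b < j)
  right_inv := by
    intro c
    funext i
    exact phiPoly_coeff_eq a c i

lemma cxq_coeff (z : ℂ) (q j : ℕ) :
    (Polynomial.C z * Polynomial.X ^ q).coeff j = if j = q then z else 0 := by
  simp [Polynomial.coeff_C_mul, Polynomial.coeff_X_pow]

noncomputable def yEquiv (q b e : ℕ) (hqb : q ≤ b) :
    {y : Polynomial ℂ // y.degree ≤ (b : ℕ) ∧ (∀ i < q, y.coeff i = 0) ∧
        (y.coeff q) ^ e = 1} ≃
      {z : ℂ // z ^ e = 1} × (Fin (b - q) → ℂ) where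
  toFun y := (⟨y.1.coeff q, y.2.2.2⟩, fun i => y.1.coeff (q + 1 + i))
  invFun zc := ⟨Polynomial.C zc.1.1 * Polynomial.X ^ q + phiPoly (q + 1) zc.2, by
      refine ⟨?_, ?_, ?_⟩
      · apply degree_le_of_coeff_zero
        intro j hj
        rw [Polynomial.coeff_add, cxq_coeff, if_neg (by omega), phiPoly_coeff,
          dif_neg (by omega), add_zero]
      · intro i hi
        rw [Polynomial.coeff_add, cxq_coeff, if_neg (by omega), phiPoly_coeff,
          dif_neg (by omega), add_zero]
      · rw [Polynomial.coeff_add, cxq_coeff, if_pos rfl, phiPoly_coeff,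
          dif_neg (by omega), add_zero]
        exact zc.1.2⟩
  left_inv := by
    rintro ⟨y, hdy, hly, hey⟩
    apply Subtype.ext
    apply Polynomial.ext
    intro j
    rw [Polynomial.coeff_add, cxq_coeff, phiPoly_coeff]
    split_ifs with h1 h2 h2
    · omega
    · subst h1; simp
    · show (0 : ℂ) + y.coeff (q + 1 + (j - (q + 1))) = y.coeff j
      rw [zero_add]; congr 1; omega
    · rw [add_zero]
      rcases lt_or_ge j q with hj | hj
      · exact (hly j hj).symm
      · refine (Polynomial.coeff_eq_zero_of_degree_lt (lt_of_le_of_lt hdy ?_)).symm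
        exact_mod_cast (by omega : b < j)
  right_inv := by
    rintro ⟨⟨z, hz⟩, c⟩
    refine Prod.ext (Subtype.ext ?_) (funext fun i => ?_)
    · show (Polynomial.C z * Polynomial.X ^ q + phiPoly (q + 1) c).coeff q = z
      rw [Polynomial.coeff_add, cxq_coeff, if_pos rfl, phiPoly_coeff,
        dif_neg (by omega), add_zero]
    · show (Polynomial.C z * Polynomial.X ^ q + phiPoly (q + 1) c).coeff (q + 1 + i) = c i
      rw [Polynomial.coeff_add, cxq_coeff, if_neg (by omega),
        phiPoly_coeff_eq (q + 1) c i, zero_add]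

end Helpers

/-- The set of `N`-jets `(x,y)` with `ord y = q` and
`(y(t)^m − x(t)^n)^{d′} ≡ t^N (mod t^{N+1})`. -/
noncomputable def jetSetA (m n d' N q : ℕ) : Set (Polynomial ℂ × Polynomial ℂ) :=
  {xy | xy.1.degree ≤ N ∧ xy.2.degree ≤ N ∧ xy.1.coeff 0 = 0 ∧ xy.2.coeff 0 = 0 ∧
    xy.2.trailingDegree = (q : ℕ∞) ∧
    (∀ i < N, ((xy.2 ^ m - xy.1 ^ n) ^ d').coeff i = 0) ∧
    ((xy.2 ^ m - xy.1 ^ n) ^ d').coeff N = 1}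

/-- Let `m` and `n` be coprime positive integers, let `d′` and `q` be positive integers
with `n ∤ q`, set `N = m·d′·q` and `p = ⌈m·q/n⌉`.  Then the set of `N`-jets `(x,y)` with
`ord y = q` and `(y(t)^m − x(t)^n)^{d′} ≡ t^N (mod t^{N+1})` is in bijection with
`μ_{m·d′} × ℂ^{2N − p − q + 1}`; explicitly, every jet in this set satisfies `ord x ≥ p`
(allowing `x = 0`), the jet condition is equivalent to `y_q^{m·d′} = 1` where `y_q` is the
leading coefficient of `y`, and all remaining coefficients of `x` and `y` are free. -/
theorem stmt14 (m n d' q : ℕ) (hm : 0 < m) (hn : 0 < n) (hmn : Nat.Coprime m n)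
    (hd' : 0 < d') (hq : 0 < q) (hnq : ¬ n ∣ q)
    (N p : ℕ) (hN : N = m * d' * q) (hp : p = (m * q) ⌈/⌉ n) :
    Nonempty (jetSetA m n d' N q ≃
      {z : ℂ // z ^ (m * d') = 1} × (Fin (2 * N - p - q + 1) → ℂ)) ∧
    (∀ xy ∈ jetSetA m n d' N q, (p : ℕ∞) ≤ xy.1.trailingDegree) ∧
    ∀ x y : Polynomial ℂ, x.degree ≤ N → y.degree ≤ N →
      x.coeff 0 = 0 → y.coeff 0 = 0 →
      y.trailingDegree = (q : ℕ∞) → (p : ℕ∞) ≤ x.trailingDegree →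
      (((∀ i < N, ((y ^ m - x ^ n) ^ d').coeff i = 0) ∧
          ((y ^ m - x ^ n) ^ d').coeff N = 1) ↔
        (y.coeff q) ^ (m * d') = 1) := by
  -- ceilDiv arithmetic
  have hmono : ∀ c, p ≤ c ↔ m * q ≤ n * c := by
    intro c; rw [hp]; exact ceilDiv_le_iff_le_mul hn
  have hnmq : ¬ n ∣ m * q := fun h => hnq (hmn.symm.dvd_of_dvd_mul_left h)
  have hnp : m * q < n * p :=
    lt_of_le_of_ne ((hmono p).1 le_rfl) (fun h => hnmq ⟨p, h⟩)
  have hmq : 0 < m * q := Nat.mul_pos hm hq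
  have hp1 : 0 < p := by
    by_contra h
    have := (hmono 0).1 (by omega)
    omega
  have hlt : ∀ r, r < p → n * r < m * q := by
    intro r hr
    by_contra h
    push_neg at h
    have := (hmono r).2 h
    omega
  have hpN : p ≤ N := by
    have h1 : m * q ≤ n * N := by
      calc m * q ≤ m * d' * q := by
            exact Nat.mul_le_mul_right q (Nat.le_mul_of_pos_right m hd')
      _ ≤ n * (m * d' * q) := Nat.le_mul_of_pos_left _ hn
      _ = n * N := by rw [hN]
    exact (hmono N).2 h1
  have hqN : q ≤ N := by
    rw [hN]
    calc q = 1 * q := (one_mul q).symm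
    _ ≤ m * d' * q := Nat.mul_le_mul_right q (Nat.mul_pos hm hd')
  -- part 3
  have third : ∀ x y : Polynomial ℂ, x.degree ≤ N → y.degree ≤ N →
      x.coeff 0 = 0 → y.coeff 0 = 0 →
      y.trailingDegree = (q : ℕ∞) → (p : ℕ∞) ≤ x.trailingDegree →
      (((∀ i < N, ((y ^ m - x ^ n) ^ d').coeff i = 0) ∧
          ((y ^ m - x ^ n) ^ d').coeff N = 1) ↔
        (y.coeff q) ^ (m * d') = 1) := by
    intro x y _ _ _ _ hty hpx
    have hyne : y ≠ 0 := fun h => by simp [h] at hty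
    have hnty : y.natTrailingDegree = q := natTrailingDegree_eq_of_trailingDegree_eq_some hty
    have hy0 : ∀ i < q, y.coeff i = 0 := fun i hi =>
      coeff_eq_zero_of_lt_trailingDegree (by rw [hty]; exact_mod_cast hi)
    have hyq : y.coeff q ≠ 0 := by
      rw [← hnty]; exact coeff_natTrailingDegree_ne_zero.2 hyne
    have hx0 : ∀ i < p, x.coeff i = 0 := fun i hi =>
      coeff_eq_zero_of_lt_trailingDegree (lt_of_lt_of_le (by exact_mod_cast hi) hpx)
    obtain ⟨k1, k2⟩ := keyLemma m n d' q N p hd' hN hnp x y hy0 hyq hx0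
    constructor
    · rintro ⟨_, h⟩
      rw [← k2]; exact h
    · intro h
      exact ⟨k1, by rw [k2, h]⟩
  -- part 2
  have second : ∀ xy ∈ jetSetA m n d' N q, (p : ℕ∞) ≤ xy.1.trailingDegree := by
    rintro ⟨x, y⟩ ⟨hdx, hdy, hx0c, hy0c, hty, hlow, htop⟩
    by_contra hcon
    push_neg at hcon
    have hxne : x ≠ 0 := by
      intro h
      rw [h, trailingDegree_zero] at hcon
      exact not_top_lt hcon
    have htx : x.trailingDegree = (x.natTrailingDegree : ℕ∞) :=
      trailingDegree_eq_natTrailingDegree hxne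
    set r := x.natTrailingDegree with hr
    have hrp : r < p := by
      rw [htx] at hcon
      exact_mod_cast hcon
    have hnr : n * r < m * q := hlt r hrp
    have hxr : x.coeff r ≠ 0 := coeff_natTrailingDegree_ne_zero.2 hxne
    have htxn : (x ^ n).trailingDegree = ((n * r : ℕ) : ℕ∞) := by
      rw [tdPow, htx]; push_cast; ring
    have hntxn : (x ^ n).natTrailingDegree = n * r :=
      natTrailingDegree_eq_of_trailingDegree_eq_some htxn
    have hcxn : (x ^ n).coeff (n * r) = (x.coeff r) ^ n := by
      rw [show (x ^ n).coeff (n * r) = (x ^ n).trailingCoeff by rw [trailingCoeff, hntxn],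
        tcPow, trailingCoeff]
    have htym : (y ^ m).trailingDegree = ((m * q : ℕ) : ℕ∞) := by
      rw [tdPow, hty]; push_cast; ring
    have hym0 : ∀ i ≤ n * r, (y ^ m).coeff i = 0 := fun i hi =>
      coeff_eq_zero_of_lt_trailingDegree
        (by rw [htym]; exact_mod_cast lt_of_le_of_lt hi hnr)
    have hu0 : ∀ i < n * r, (y ^ m - x ^ n).coeff i = 0 := by
      intro i hi
      rw [Polynomial.coeff_sub, hym0 i (le_of_lt hi),
        coeff_eq_zero_of_lt_trailingDegree (by rw [htxn]; exact_mod_cast hi), sub_zero]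
    have hur : (y ^ m - x ^ n).coeff (n * r) ≠ 0 := by
      rw [Polynomial.coeff_sub, hym0 (n * r) le_rfl, zero_sub, neg_ne_zero, hcxn]
      exact pow_ne_zero _ hxr
    obtain ⟨htu, hcu⟩ := ordSpec hu0 hur
    have htv : ((y ^ m - x ^ n) ^ d').trailingDegree = ((d' * (n * r) : ℕ) : ℕ∞) := by
      rw [tdPow, htu]; push_cast; ring
    have hntv : ((y ^ m - x ^ n) ^ d').natTrailingDegree = d' * (n * r) :=
      natTrailingDegree_eq_of_trailingDegree_eq_some htv
    have hvne : (y ^ m - x ^ n) ^ d' ≠ 0 :=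
      pow_ne_zero _ (fun h => hur (by simp [h]))
    have hco : ((y ^ m - x ^ n) ^ d').coeff (d' * (n * r)) ≠ 0 := by
      rw [← hntv]
      exact coeff_natTrailingDegree_ne_zero.2 hvne
    refine hco (hlow _ ?_)
    rw [hN]
    calc d' * (n * r) < d' * (m * q) := by exact Nat.mul_lt_mul_of_le_of_lt le_rfl hnr hd'
    _ = m * d' * q := by ring
  -- the set as a product
  have hzne : ∀ z : ℂ, z ^ (m * d') = 1 → z ≠ 0 := by
    intro z hz h0
    rw [h0, zero_pow (Nat.mul_ne_zero hm.ne' hd'.ne')] at hz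
    exact one_ne_zero hz.symm
  have hset : jetSetA m n d' N q =
      ({x : Polynomial ℂ | x.degree ≤ (N : ℕ) ∧ ∀ i < p, x.coeff i = 0} ×ˢ
       {y : Polynomial ℂ | y.degree ≤ (N : ℕ) ∧ (∀ i < q, y.coeff i = 0) ∧
          (y.coeff q) ^ (m * d') = 1}) := by
    ext ⟨x, y⟩
    simp only [jetSetA, Set.mem_setOf_eq, Set.mem_prod]
    constructor
    · rintro ⟨hdx, hdy, hx0c, hy0c, hty, hlow, htop⟩
      have hordx := second (x, y) ⟨hdx, hdy, hx0c, hy0c, hty, hlow, htop⟩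
      exact ⟨⟨hdx, fun i hi => coeff_eq_zero_of_lt_trailingDegree
          (lt_of_lt_of_le (by exact_mod_cast hi) hordx)⟩,
        hdy, fun i hi => coeff_eq_zero_of_lt_trailingDegree
          (by rw [hty]; exact_mod_cast hi),
        (third x y hdx hdy hx0c hy0c hty hordx).1 ⟨hlow, htop⟩⟩
    · rintro ⟨⟨hdx, hx0⟩, hdy, hy0, hyq1⟩
      have hyq : y.coeff q ≠ 0 := hzne _ hyq1
      have hty : y.trailingDegree = (q : ℕ∞) := (ordSpec hy0 hyq).1
      have hordx : (p : ℕ∞) ≤ x.trailingDegree := leTd hx0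
      obtain ⟨hlow, htop⟩ :=
        (third x y hdx hdy (hx0 0 hp1) (hy0 0 hq) hty hordx).2 hyq1
      exact ⟨hdx, hdy, hx0 0 hp1, hy0 0 hq, hty, hlow, htop⟩
  refine ⟨⟨?_⟩, second, third⟩
  have E1 : jetSetA m n d' N q ≃
      ↥({x : Polynomial ℂ | x.degree ≤ (N : ℕ) ∧ ∀ i < p, x.coeff i = 0} ×ˢ
        {y : Polynomial ℂ | y.degree ≤ (N : ℕ) ∧ (∀ i < q, y.coeff i = 0) ∧
          (y.coeff q) ^ (m * d') = 1}) := Equiv.setCongr hset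
  have E3 := segEquiv p N (by omega)
  have E4 := yEquiv q N (m * d') hqN
  exact E1.trans <| (Equiv.Set.prod _ _).trans <| (E3.prodCongr E4).trans <|
    ((Equiv.prodAssoc _ _ _).symm.trans <|
      ((Equiv.prodComm _ _).prodCongr (Equiv.refl _)).trans <|
      Equiv.prodAssoc _ _ _).trans <|
    (Equiv.refl _).prodCongr <|
      ((Equiv.sumArrowEquivProdArrow _ _ ℂ).symm.trans <|
        (Equiv.arrowCongr finSumFinEquiv (Equiv.refl ℂ)).trans <|
        Equiv.arrowCongr (finCongr (by omega)) (Equiv.refl ℂ))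
end
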